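/- Let a ∈ B(H) have propagation at most p and suppose a agrees with 0 outside the r-neighborhood of W in the weak sense that ρ(φ)aρ(ψ) = 0 for all φ, ψ ∈ C₀(M) such that every point of supp φ and every point of supp ψ has distance > r from W. Then a is supported near W: ρ(φ)a = 0 = aρ(φ) for every φ ∈ C₀(M) with d(x, W) > r + p for all x ∈ supp φ. -/

import Mathlib

open Metric ZeroAtInfty

variable {M : Type*} [MetricSpace M] [ProperSpace M]
variable {H : Type*} [NormedAddCommGroup H] [InnerProductSpace ℂ H] [CompleteSpace H]

/-- `T` has propagation at most `p` with respect to the representation `ρ`. -/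
def HasPropagationLE (ρ : C₀(M, ℂ) →⋆ₙₐ[ℂ] (H →L[ℂ] H)) (T : H →L[ℂ] H) (p : ℝ) : Prop :=
  ∀ φ ψ : C₀(M, ℂ),
    (∀ x ∈ tsupport ⇑φ, ∀ y ∈ tsupport ⇑ψ, p < dist x y) → ρ φ * T * ρ ψ = 0

/-- `ρ` is a nondegenerate representation of `C₀(M)`. -/
def Nondegenerate (ρ : C₀(M, ℂ) →⋆ₙₐ[ℂ] (H →L[ℂ] H)) : Prop :=
  Dense (Submodule.span ℂ (⋃ φ : C₀(M, ℂ), Set.range ⇑(ρ φ)) : Set H)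

/-!
By nondegeneracy of `ρ` it suffices to show `ρ φ * a * ρ ψ = 0 = ρ ψ * a * ρ φ` for every `ψ`.
As `M` is proper, the closed `p`-thickening of `supp φ` is the union of the closed `p`-balls about
its points, so it is disjoint from `{x | d(x, W) ≤ r}`. A Urysohn function `χ` separating these two
closed sets splits `ψ = χ ψ + (1 - χ) ψ`, where `χ ψ` is supported farther than `r` from `W` and
`(1 - χ) ψ` farther than `p` from `supp φ`: the first piece is killed by the vanishing hypothesis,
the second by finite propagation. A negative propagation bound forces `a = 0`.
-/

open BoundedContinuousFunction

theorem disjoint_tsupport_of_eqOn_zero {X E : Type*} [TopologicalSpace X] [Zero E] {f : X → E}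
    {u : Set X} (hu : IsOpen u) (hf : Set.EqOn f 0 u) : Disjoint (tsupport f) u :=
  Set.subset_compl_iff_disjoint_right.mp <|
    closure_minimal (fun _ hx hxu => hx (hf hxu)) hu.isClosed_compl

theorem exists_boundedContinuousFunction_disjoint_tsupport {X : Type*} [TopologicalSpace X]
    [NormalSpace X] {s t : Set X} (hs : IsClosed s) (ht : IsClosed t) (hst : Disjoint s t) :
    ∃ χ : X →ᵇ ℝ, Disjoint (tsupport χ) s ∧ Disjoint (tsupport ⇑(1 - χ)) t := by
  -- Urysohn is applied to closed neighbourhoods of `s` and `t`, so that `χ` and `1 - χ` vanish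
  -- on open sets around them, which controls their closed supports.
  obtain ⟨u, hu, hsu, hut⟩ :=
    normal_exists_closure_subset hs ht.isOpen_compl hst.subset_compl_right
  obtain ⟨v, hv, htv, hvu⟩ :=
    normal_exists_closure_subset ht isClosed_closure.isOpen_compl (Set.subset_compl_comm.mp hut)
  obtain ⟨χ, hχu, hχv, -⟩ := exists_bounded_zero_one_of_closed isClosed_closure isClosed_closure
    (Set.subset_compl_iff_disjoint_right.mp hvu).symm
  refine ⟨χ, (disjoint_tsupport_of_eqOn_zero hu (hχu.mono subset_closure)).mono_right hsu,
    (disjoint_tsupport_of_eqOn_zero hv fun x hx => ?_).mono_right htv⟩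
  simp [hχv (subset_closure hx)]

namespace ZeroAtInftyContinuousMap

variable {α 𝕜 E : Type*} [TopologicalSpace α] [NormedField 𝕜] [NormedAddCommGroup E]
  [NormedSpace 𝕜 E]

instance : SMul (α →ᵇ 𝕜) C₀(α, E) where
  smul g f := ⟨⟨fun x => g x • f x, g.continuous.smul f.continuous⟩, by
    refine squeeze_zero_norm (fun x => ?_) (by simpa using (zero_at_infty f).norm.const_mul ‖g‖)
    rw [norm_smul]
    exact mul_le_mul_of_nonneg_right (g.norm_coe_le_norm x) (norm_nonneg _)⟩

@[simp]
theorem bcf_smul_apply (g : α →ᵇ 𝕜) (f : C₀(α, E)) (x : α) : (g • f) x = g x • f x :=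
  rfl

theorem bcf_smul_add_one_sub_smul (g : α →ᵇ 𝕜) (f : C₀(α, E)) : g • f + (1 - g) • f = f :=
  ext fun x => by simp [sub_smul]

theorem tsupport_bcf_smul_subset (g : α →ᵇ 𝕜) (f : C₀(α, E)) :
    tsupport ⇑(g • f) ⊆ tsupport g :=
  tsupport_smul_subset_left (M := 𝕜) g f

end ZeroAtInftyContinuousMap

section MetricSpace

variable {X : Type*} [MetricSpace X]

open ZeroAtInftyContinuousMap in
theorem exists_eq_add_of_infDist_gt [ProperSpace X] {E : Type*} [NormedAddCommGroup E]
    [NormedSpace ℝ E] {K W : Set X} (hK : IsClosed K) {r p : ℝ} (hp : 0 ≤ p)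
    (hKW : ∀ x ∈ K, r + p < infDist x W) (ψ : C₀(X, E)) :
    ∃ ψ₁ ψ₂ : C₀(X, E), ψ = ψ₁ + ψ₂ ∧ (∀ y ∈ tsupport ψ₁, r < infDist y W) ∧
      ∀ x ∈ K, ∀ y ∈ tsupport ψ₂, p < dist x y := by
  have hdisj : Disjoint {y | infDist y W ≤ r} (cthickening p K) := by
    refine Set.disjoint_left.mpr fun y hyW hyK => ?_
    rw [hK.cthickening_eq_biUnion_closedBall hp] at hyK
    obtain ⟨x, hx, hxy⟩ := Set.mem_iUnion₂.mp hyK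
    have hxy' : dist x y ≤ p := dist_comm x y ▸ hxy
    linarith [hKW x hx, infDist_le_infDist_add_dist (x := x) (y := y) (s := W),
      show infDist y W ≤ r from hyW]
  obtain ⟨χ, hχW, hχK⟩ := exists_boundedContinuousFunction_disjoint_tsupport
    (isClosed_le (continuous_infDist_pt W) continuous_const) isClosed_cthickening hdisj
  refine ⟨χ • ψ, (1 - χ) • ψ, (bcf_smul_add_one_sub_smul χ ψ).symm, fun y hy => ?_,
    fun x hx y hy => ?_⟩
  · exact not_le.mp (hχW.notMem_of_mem_left (tsupport_bcf_smul_subset χ ψ hy))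
  · refine not_le.mp fun hxy => hχK.notMem_of_mem_left (tsupport_bcf_smul_subset _ ψ hy) ?_
    exact mem_cthickening_of_dist_le y x p K hx (dist_comm x y ▸ hxy)

variable {E : Type*} [NormedAddCommGroup E] [InnerProductSpace ℂ E] [CompleteSpace E]
  {ρ : C₀(X, ℂ) →⋆ₙₐ[ℂ] (E →L[ℂ] E)}

theorem Nondegenerate.eq_zero_of_forall_mul_map_eq_zero (hρ : Nondegenerate ρ) {T : E →L[ℂ] E}
    (h : ∀ ψ, T * ρ ψ = 0) : T = 0 :=
  ContinuousLinearMap.ext_on hρ fun _ hv => by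
    obtain ⟨ψ, w, rfl⟩ := Set.mem_iUnion.mp hv
    exact DFunLike.congr_fun (h ψ) w

theorem Nondegenerate.eq_zero_of_forall_map_mul_eq_zero (hρ : Nondegenerate ρ) {T : E →L[ℂ] E}
    (h : ∀ ψ, ρ ψ * T = 0) : T = 0 := by
  refine star_eq_zero.mp (hρ.eq_zero_of_forall_mul_map_eq_zero fun ψ => ?_)
  simpa [star_mul, map_star] using congrArg star (h (star ψ))

theorem HasPropagationLE.eq_zero_of_neg (hρ : Nondegenerate ρ) {a : E →L[ℂ] E} {p : ℝ}
    (ha : HasPropagationLE ρ a p) (hp : p < 0) : a = 0 :=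
  hρ.eq_zero_of_forall_mul_map_eq_zero fun ψ => hρ.eq_zero_of_forall_map_mul_eq_zero fun φ => by
    rw [← mul_assoc]
    exact ha φ ψ fun _ _ _ _ => hp.trans_le dist_nonneg

theorem HasPropagationLE.map_mul_mul_map_eq_zero [ProperSpace X] {a : E →L[ℂ] E} {p : ℝ}
    (ha : HasPropagationLE ρ a p) (hp : 0 ≤ p) {W : Set X} {r : ℝ}
    (hout : ∀ φ ψ : C₀(X, ℂ),
      (∀ x ∈ tsupport ⇑φ, r < infDist x W) →
      (∀ y ∈ tsupport ⇑ψ, r < infDist y W) →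
      ρ φ * a * ρ ψ = 0)
    {φ : C₀(X, ℂ)} (hφ : ∀ x ∈ tsupport ⇑φ, r + p < infDist x W) (ψ : C₀(X, ℂ)) :
    ρ φ * a * ρ ψ = 0 ∧ ρ ψ * a * ρ φ = 0 := by
  obtain ⟨ψ₁, ψ₂, rfl, hψ₁, hψ₂⟩ := exists_eq_add_of_infDist_gt (isClosed_tsupport _) hp hφ ψ
  have hφr : ∀ x ∈ tsupport ⇑φ, r < infDist x W := fun x hx => by linarith [hφ x hx]
  constructor
  · rw [map_add, mul_add, hout φ ψ₁ hφr hψ₁, ha φ ψ₂ hψ₂, add_zero]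
  · rw [map_add, add_mul, add_mul, hout ψ₁ φ hψ₁ hφr,
      ha ψ₂ φ fun y hy x hx => dist_comm x y ▸ hψ₂ x hx y hy, add_zero]

end MetricSpace

theorem finite_propagation_supported_near_general
    (ρ : C₀(M, ℂ) →⋆ₙₐ[ℂ] (H →L[ℂ] H)) (hρ : Nondegenerate ρ)
    (W : Set M)
    (a : H →L[ℂ] H) (p : ℝ) (ha : HasPropagationLE ρ a p)
    (r : ℝ)
    (hout : ∀ φ ψ : C₀(M, ℂ),
      (∀ x ∈ tsupport ⇑φ, r < infDist x W) →
      (∀ y ∈ tsupport ⇑ψ, r < infDist y W) →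
      ρ φ * a * ρ ψ = 0) :
    ∀ φ : C₀(M, ℂ), (∀ x ∈ tsupport ⇑φ, r + p < infDist x W) →
      ρ φ * a = 0 ∧ a * ρ φ = 0 := by
  intro φ hφ
  rcases lt_or_ge p 0 with hp | hp
  · simp [ha.eq_zero_of_neg hρ hp]
  have key := ha.map_mul_mul_map_eq_zero hp hout hφ
  refine ⟨hρ.eq_zero_of_forall_mul_map_eq_zero fun ψ => (key ψ).1,
    hρ.eq_zero_of_forall_map_mul_eq_zero fun ψ => ?_⟩
  rw [← mul_assoc]
  exact (key ψ).2

/-- a finite-propagation operator which vanishes (in the weak,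
two-sided sense) outside the `r`-neighborhood of `W` is supported near `W`. -/
theorem finite_propagation_supported_near
    (ρ : C₀(M, ℂ) →⋆ₙₐ[ℂ] (H →L[ℂ] H)) (hρ : Nondegenerate ρ)
    (W : Set M) (hW : IsClosed W)
    (a : H →L[ℂ] H) (p : ℝ) (ha : HasPropagationLE ρ a p)
    (r : ℝ)
    (hout : ∀ φ ψ : C₀(M, ℂ),
      (∀ x ∈ tsupport ⇑φ, r < infDist x W) →
      (∀ y ∈ tsupport ⇑ψ, r < infDist y W) →
      ρ φ * a * ρ ψ = 0) :
    ∀ φ : C₀(M, ℂ), (∀ x ∈ tsupport ⇑φ, r + p < infDist x W) →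
      ρ φ * a = 0 ∧ a * ρ φ = 0 :=
  finite_propagation_supported_near_general ρ hρ W a p ha r hout
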